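/- Let A be an Artinian module over a Noetherian local ring R. Then the set of minimal elements of the attached primes of A equals the set of minimal primes over the annihilator of A. In particular, A is nonzero if and only if its set of attached primes is nonempty. -/

import Mathlib

universe u

noncomputable section

/-- Krull dimension of a module: the Krull dimension of `R` modulo the annihilator of `M`. -/
def moduleDim (R : Type*) [CommRing R] (M : Type*) [AddCommGroup M] [Module R M] :
    WithBot (WithTop ℕ) :=
  ringKrullDim (R ⧸ Module.annihilator R M)

/-- Depth of a module `M` relative to an ideal `I`: the supremum of the lengths of
regular sequences on `M` consisting of elements of `I`. -/
def depthIn (R : Type*) [CommRing R] (I : Ideal R) (M : Type*) [AddCommGroup M]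
    [Module R M] : ℕ∞ :=
  sSup {n : ℕ∞ | ∃ rs : List R, (rs.length : ℕ∞) = n ∧ (∀ r ∈ rs, r ∈ I) ∧
    RingTheory.Sequence.IsRegular M rs}

/-- A (Noetherian local) ring is Cohen-Macaulay if it is Noetherian, local, and its depth
equals its Krull dimension. -/
def IsCMLocalRing (A : Type*) [CommRing A] : Prop :=
  IsNoetherianRing A ∧ ∃ _h : IsLocalRing A,
    letI := _h
    (depthIn A (IsLocalRing.maximalIdeal A) A : WithBot ℕ∞) = ringKrullDim A

/-- A module over a local ring is Cohen-Macaulay if it is zero or its depth equals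
its dimension. -/
def IsCMModule (R : Type*) [CommRing R] [IsLocalRing R] (M : Type*) [AddCommGroup M]
    [Module R M] : Prop :=
  Subsingleton M ∨ (depthIn R (IsLocalRing.maximalIdeal R) M : WithBot ℕ∞) = moduleDim R M

/-- The non-Cohen-Macaulay locus of a module, as a set of prime ideals. -/
def nCMLocus (R : Type*) [CommRing R] (M : Type*) [AddCommGroup M] [Module R M] :
    Set (Ideal R) :=
  {p | ∃ h : p.IsPrime,
    letI := h
    ¬ IsCMModule (Localization.AtPrime p) (LocalizedModule p.primeCompl M)}

/-- The support of a module, as a set of prime ideals. -/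
def suppSet (R : Type*) [CommRing R] (M : Type*) [AddCommGroup M] [Module R M] :
    Set (Ideal R) :=
  {p | ∃ h : p.IsPrime,
    letI := h
    Nontrivial (LocalizedModule p.primeCompl M)}

/-- The dimension of a set of primes: the supremum of `dim R/p`. -/
def locusDim (R : Type*) [CommRing R] (s : Set (Ideal R)) : WithBot (WithTop ℕ) :=
  sSup ((fun p => ringKrullDim (R ⧸ p)) '' s)

/-- The subset of `Spec R` corresponding to a set of prime ideals. -/
def zariskiSet (R : Type*) [CommRing R] (s : Set (Ideal R)) : Set (PrimeSpectrum R) :=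
  {x | x.asIdeal ∈ s}

/-- A module is `p`-secondary if it is nonzero, `p` is the radical of its annihilator, and
every ring element acts either surjectively or nilpotently. -/
def IsSecondary (R : Type*) [CommRing R] (M : Type*) [AddCommGroup M] [Module R M]
    (p : Ideal R) : Prop :=
  Nontrivial M ∧ p = (Module.annihilator R M).radical ∧
    ∀ r : R, Function.Surjective (fun m : M => r • m) ∨ r ∈ (Module.annihilator R M).radical

/-- The attached primes of a module: primes `p` such that some quotient of `M`
is `p`-secondary. -/
def attachedPrimes (R : Type*) [CommRing R] (M : Type*) [AddCommGroup M] [Module R M] :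
    Set (Ideal R) :=
  {p | p.IsPrime ∧ ∃ N : Submodule R M, IsSecondary R (M ⧸ N) p}

/-- The `m`-adic completion of a local ring. -/
abbrev completionRing (R : Type u) [CommRing R] [IsLocalRing R] : Type u :=
  AdicCompletion (IsLocalRing.maximalIdeal R) R

/-- `R/p` is unmixed: all associated primes of its completion have the same dimension
`dim R/p`. -/
def IsUnmixed (R : Type u) [CommRing R] [IsLocalRing R] (p : Ideal R) : Prop :=
  ∀ P ∈ associatedPrimes (completionRing R)
      ((completionRing R) ⧸ p.map (algebraMap R (completionRing R))),
    ringKrullDim ((completionRing R) ⧸ P) = ringKrullDim (R ⧸ p)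

/-- The formal fiber of `R` at `p` is Cohen-Macaulay: for every prime `P` of the completion
lying over `p`, the local ring `R̂_P / p R̂_P` is Cohen-Macaulay. -/
def HasCMFormalFiberAt (R : Type u) [CommRing R] [IsLocalRing R] (p : Ideal R) : Prop :=
  ∀ (P : Ideal (completionRing R)) (hP : P.IsPrime),
    P.comap (algebraMap R (completionRing R)) = p →
    letI := hP
    IsCMLocalRing ((Localization.AtPrime P) ⧸
      p.map ((algebraMap (completionRing R) (Localization.AtPrime P)).comp
        (algebraMap R (completionRing R))))

/-- The ideal `a(M) = a_0(M) ⋯ a_{d-1}(M)`, the product of the annihilators of the local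
cohomology modules `H^i_m(M)` for `i < d`. -/
def aIdeal (R : Type u) [CommRing R] [IsLocalRing R] (M : Type u) [AddCommGroup M]
    [Module R M] (d : ℕ) : Ideal R :=
  ∏ i ∈ Finset.range d,
    Module.annihilator R
      ((localCohomology (IsLocalRing.maximalIdeal R) i).obj (ModuleCat.of R M))

/-- A chain is saturated if nothing can be inserted between consecutive elements. -/
def IsSaturatedChain {α : Type*} [Preorder α] (c : LTSeries α) : Prop :=
  ∀ i : Fin c.length, ∀ x : α, ¬ (c i.castSucc < x ∧ x < c i.succ)

/-- A ring is catenary if any two saturated chains of primes with the same endpoints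
have the same length. -/
def IsCatenaryRing (A : Type*) [CommRing A] : Prop :=
  ∀ c₁ c₂ : LTSeries (PrimeSpectrum A),
    c₁.head = c₂.head → c₁.last = c₂.last →
    IsSaturatedChain c₁ → IsSaturatedChain c₂ → c₁.length = c₂.length

end

/-
A sup-irreducible submodule `X` of an Artinian module is secondary: by the Fitting lemma,
`X = ker rⁿ ⊔ rⁿ X` for large `n`, so `r` acts on `X` either nilpotently or surjectively. Hence
an Artinian module is an irredundant finite sum of secondary submodules `Xᵢ`. A minimal prime `p`
over `Ann M = ⋂ Ann Xᵢ` contains some `Ann Xᵢ`, so by minimality it is the prime `√(Ann Xᵢ)`,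
and `M` modulo the sum of the other summands is a nonzero quotient of `Xᵢ`, hence `p`-secondary.
Conversely every attached prime contains `Ann M`, so both sets have the same minimal elements.
-/

theorem Finset.sup_sup_erase_id {α : Type*} [SemilatticeSup α] [OrderBot α] [DecidableEq α]
    {s : Finset α} {x : α} (hx : x ∈ s) : x ⊔ (s.erase x).sup id = s.sup id :=
  (sup_insert (f := id)).symm.trans (by rw [insert_erase hx])

theorem Finset.exists_irredundant_subset_sup_id_eq {α : Type*} [SemilatticeSup α] [OrderBot α]
    [DecidableEq α] (s : Finset α) :
    ∃ t ⊆ s, t.sup id = s.sup id ∧ ∀ x ∈ t, ¬ x ≤ (t.erase x).sup id := by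
  obtain ⟨t, ⟨hts, ht⟩, hmin⟩ :=
    wellFounded_lt.has_min {t : Finset α | t ⊆ s ∧ t.sup id = s.sup id} ⟨s, subset_rfl, rfl⟩
  refine ⟨t, hts, ht, fun x hx hle => hmin (t.erase x) ⟨(erase_subset x t).trans hts, ?_⟩
    (erase_ssubset hx)⟩
  rw [← ht, ← sup_sup_erase_id hx, sup_eq_right.mpr hle]

theorem Ideal.setOf_minimal_eq_minimalPrimes {R : Type*} [CommSemiring R] {S : Set (Ideal R)}
    {I : Ideal R} (hS : ∀ p ∈ S, p.IsPrime ∧ I ≤ p) (hI : I.minimalPrimes ⊆ S) :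
    {p | Minimal (· ∈ S) p} = I.minimalPrimes := by
  ext p
  refine ⟨fun hp => ?_, fun hp => ?_⟩
  · have : p.IsPrime := (hS p hp.1).1
    obtain ⟨q, hq, hqp⟩ := Ideal.exists_minimalPrimes_le (hS p hp.1).2
    rwa [(hp.2 (hI hq) hqp).antisymm hqp]
  · exact (show Minimal (fun q : Ideal R => q.IsPrime ∧ I ≤ q) p from hp).mono hS (hI hp)

namespace Submodule

variable {R M : Type*} [CommSemiring R] [AddCommMonoid M] [Module R M]

theorem annihilator_finset_sup (s : Finset (Submodule R M)) :
    (s.sup id).annihilator = s.inf annihilator := by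
  simp only [Finset.sup_eq_iSup, Finset.inf_eq_iInf, annihilator_iSup, id]

theorem supIrred_top_of_supIrred {X : Submodule R M} (hX : SupIrred X) :
    SupIrred (⊤ : Submodule R X) := by
  have hinj := map_injective_of_injective X.injective_subtype
  refine ⟨fun hmin => hX.ne_bot ?_, fun Y Z hYZ => ?_⟩
  · rw [← map_subtype_top X, hmin.eq_bot, map_bot]
  · have := hX.2 (show Y.map X.subtype ⊔ Z.map X.subtype = X by
      rw [← map_sup, hYZ, map_subtype_top])
    exact this.imp (fun h => hinj (h.trans (map_subtype_top X).symm))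
      (fun h => hinj (h.trans (map_subtype_top X).symm))

end Submodule

section Secondary

variable {R M N : Type*} [CommRing R] [AddCommGroup M] [Module R M] [AddCommGroup N]
  [Module R N]

open Module

theorem notMem_radical_annihilator_of_surjective_smul [Nontrivial M] {r : R}
    (hr : Function.Surjective (fun m : M => r • m)) : r ∉ (annihilator R M).radical := by
  rintro ⟨n, hn⟩
  obtain ⟨m, hm⟩ := exists_ne (0 : M)
  have hrn := hr.iterate n
  rw [smul_iterate] at hrn
  obtain ⟨m', rfl⟩ := hrn m
  exact hm (mem_annihilator.mp hn m')

theorem IsSecondary.isPrime {p : Ideal R} (h : IsSecondary R M p) : p.IsPrime := by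
  obtain ⟨_, rfl, hdich⟩ := h
  refine Ideal.isPrime_iff.mpr ⟨fun htop => ?_, fun {r s} hrs => ?_⟩
  · exact notMem_radical_annihilator_of_surjective_smul (r := (1 : R))
      (fun m => ⟨m, one_smul R m⟩) (htop ▸ Submodule.mem_top)
  · by_contra! hcon
    have hsurj := ((hdich r).resolve_right hcon.1).comp ((hdich s).resolve_right hcon.2)
    exact notMem_radical_annihilator_of_surjective_smul
      (by simpa only [Function.comp_def, mul_smul] using hsurj) hrs

theorem IsSecondary.of_surjective [Nontrivial N] {p : Ideal R} (h : IsSecondary R M p)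
    (f : M →ₗ[R] N) (hf : Function.Surjective f) : IsSecondary R N p := by
  obtain ⟨_, rfl, hdich⟩ := h
  have hrad := Ideal.radical_mono (f.annihilator_le_of_surjective hf)
  have hsurj {r : R} (hr : Function.Surjective (fun m : M => r • m)) :
      Function.Surjective (fun n : N => r • n) :=
    fun n => by
      obtain ⟨m, rfl⟩ := hf n
      obtain ⟨m', rfl⟩ := hr m
      exact ⟨f m', (f.map_smul r m').symm⟩
  refine ⟨‹_›, hrad.antisymm fun r hr => ?_, fun r => (hdich r).imp hsurj (hrad ·)⟩
  by_contra hrM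
  exact notMem_radical_annihilator_of_surjective_smul (hsurj ((hdich r).resolve_right hrM)) hr

theorem IsSecondary.quotient_of_sup_eq_top {X N : Submodule R M} {p : Ideal R}
    (hX : IsSecondary R X p) (hsup : X ⊔ N = ⊤) (hXN : ¬ X ≤ N) : IsSecondary R (M ⧸ N) p := by
  have : Nontrivial (M ⧸ N) :=
    Submodule.Quotient.nontrivial_iff.mpr fun hN => hXN (hN ▸ le_top)
  refine hX.of_surjective (N.mkQ ∘ₗ X.subtype) (LinearMap.range_eq_top.mp ?_)
  rw [LinearMap.range_comp, Submodule.range_subtype, Submodule.map_mkQ_eq_top, sup_comm, hsup]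

theorem IsArtinian.isSecondary_of_supIrred_top [IsArtinian R M]
    (hM : SupIrred (⊤ : Submodule R M)) : IsSecondary R M (annihilator R M).radical := by
  have : Nontrivial M := (Submodule.nontrivial_iff R).mp (nontrivial_of_ne _ _ hM.ne_bot)
  refine ⟨this, rfl, fun r => ?_⟩
  set f : Module.End R M := algebraMap R (Module.End R M) r
  obtain ⟨n, hfitting, hn⟩ := (f.eventually_codisjoint_ker_pow_range_pow.and
    (Filter.eventually_ge_atTop 1)).exists
  have hpow (m : M) : (f ^ n) m = r ^ n • m := by
    rw [← map_pow, Module.algebraMap_end_apply]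
  rcases hM.2 (codisjoint_iff.mp hfitting) with hker | hrange
  · exact Or.inr ⟨n, mem_annihilator.mpr fun m => by
      rw [← hpow, LinearMap.ker_eq_top.mp hker, LinearMap.zero_apply]⟩
  · left
    obtain ⟨k, rfl⟩ := Nat.exists_eq_add_of_le' hn
    intro m
    obtain ⟨m', hm'⟩ := LinearMap.range_eq_top.mp hrange m
    exact ⟨r ^ k • m', by rw [← hm', hpow, pow_succ', mul_smul]⟩

theorem IsArtinian.exists_irredundant_secondary_decomposition [IsArtinian R M] :
    ∃ s : Finset (Submodule R M), s.sup id = ⊤ ∧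
      (∀ X ∈ s, IsSecondary R X X.annihilator.radical) ∧ ∀ X ∈ s, ¬ X ≤ (s.erase X).sup id := by
  classical
  obtain ⟨s, hs, hirr⟩ := exists_supIrred_decomposition (⊤ : Submodule R M)
  obtain ⟨t, hts, ht, hred⟩ := s.exists_irredundant_subset_sup_id_eq
  exact ⟨t, ht.trans hs, fun X hX =>
    isSecondary_of_supIrred_top (Submodule.supIrred_top_of_supIrred (hirr (hts hX))), hred⟩

end Secondary

section AttachedPrimes

variable {R M : Type*} [CommRing R] [AddCommGroup M] [Module R M]

open Module

theorem annihilator_le_of_mem_attachedPrimes {p : Ideal R} (hp : p ∈ attachedPrimes R M) :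
    annihilator R M ≤ p := by
  obtain ⟨-, N, -, rfl, -⟩ := hp
  exact (N.mkQ.annihilator_le_of_surjective N.mkQ_surjective).trans Ideal.le_radical

theorem nontrivial_of_mem_attachedPrimes {p : Ideal R} (hp : p ∈ attachedPrimes R M) :
    Nontrivial M := by
  obtain ⟨-, N, _, -⟩ := hp
  exact N.mkQ_surjective.nontrivial

theorem mem_attachedPrimes_of_mem_minimalPrimes [IsArtinian R M] {p : Ideal R}
    (hp : p ∈ (annihilator R M).minimalPrimes) : p ∈ attachedPrimes R M := by
  classical
  obtain ⟨s, htop, hsec, hred⟩ :=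
    IsArtinian.exists_irredundant_secondary_decomposition (R := R) (M := M)
  have hprime : p.IsPrime := hp.1.1
  obtain ⟨X, hXs, hXp⟩ : ∃ X ∈ s, X.annihilator ≤ p := by
    rw [← hprime.inf_le', ← Submodule.annihilator_finset_sup, htop, Submodule.annihilator_top]
    exact hp.1.2
  have hann : annihilator R M ≤ X.annihilator.radical :=
    (X.subtype.annihilator_le_of_injective X.injective_subtype).trans Ideal.le_radical
  have hradp : X.annihilator.radical ≤ p := hprime.radical_le_iff.mpr hXp
  have hpX : p = X.annihilator.radical :=
    (hp.2 ⟨(hsec X hXs).isPrime, hann⟩ hradp).antisymm hradp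
  refine ⟨hprime, _, hpX ▸ (hsec X hXs).quotient_of_sup_eq_top ?_ (hred X hXs)⟩
  rw [Finset.sup_sup_erase_id hXs, htop]

end AttachedPrimes

theorem minimal_attachedPrimes_eq_minimalPrimes_annihilator_general
    (R : Type u) [CommRing R]
    (A : Type u) [AddCommGroup A] [Module R A] [IsArtinian R A] :
    {p : Ideal R | Minimal (· ∈ attachedPrimes R A) p} =
      (Module.annihilator R A).minimalPrimes ∧
    (Nontrivial A ↔ (attachedPrimes R A).Nonempty) := by
  refine ⟨Ideal.setOf_minimal_eq_minimalPrimes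
    (fun p hp => ⟨hp.1, annihilator_le_of_mem_attachedPrimes hp⟩)
    (fun p hp => mem_attachedPrimes_of_mem_minimalPrimes hp),
    fun hA => ?_, fun ⟨p, hp⟩ => nontrivial_of_mem_attachedPrimes hp⟩
  obtain ⟨p, hp⟩ := Ideal.nonempty_minimalPrimes (I := Module.annihilator R A)
    (by rwa [Ne, Module.annihilator_eq_top_iff, not_subsingleton_iff_nontrivial])
  exact ⟨p, mem_attachedPrimes_of_mem_minimalPrimes hp⟩

theorem minimal_attachedPrimes_eq_minimalPrimes_annihilator
    (R : Type u) [CommRing R] [IsNoetherianRing R] [IsLocalRing R]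
    (A : Type u) [AddCommGroup A] [Module R A] [IsArtinian R A] :
    {p : Ideal R | Minimal (· ∈ attachedPrimes R A) p} =
      (Module.annihilator R A).minimalPrimes ∧
    (Nontrivial A ↔ (attachedPrimes R A).Nonempty) :=
  minimal_attachedPrimes_eq_minimalPrimes_annihilator_general R A
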